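/- In the Gaussian mean estimation problem with squared loss ℓ_p(θ,z) = (θ−z)² and the learning map 𝔪(ν_n) = N( E_{Z∼ν_n}[Z], σ̃²/n ) (the law of the empirical-mean estimator), trained on n i.i.d. samples from N(μ, σ̃²), the weak generalization error equals exactly 2σ̃²/n: E[R(𝔪(ν_n), ν_pop) − R(𝔪(ν_n), ν_n)] = 2σ̃²/n. -/

import Mathlib

/-!
Since the parameter measure is Gaussian, both risks are explicit:
`sqLoss (gaussianReal m s) z = (m - z) ^ 2 + s`. Writing `Z̄` for the sample mean, the identity
`∑ (Z̄ - Zᵢ)² = ∑ (Zᵢ - μ₀)² - n (Z̄ - μ₀)²` turns the gap into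
`v + 2 (Z̄ - μ₀)² - n⁻¹ ∑ (Zᵢ - μ₀)²`. By independence `Z̄` has variance `v / n`, so the expected
gap is `v + 2 v / n - v`.
-/

open MeasureTheory ProbabilityTheory
open scoped ENNReal NNReal

/-- The empirical measure of the first `n` samples. -/
noncomputable def empMeas {Ω : Type*} [MeasurableSpace Ω] (n : ℕ) (Z : ℕ → Ω → ℝ)
    (ω : Ω) : Measure ℝ :=
  (n : ℝ≥0∞)⁻¹ • ∑ i ∈ Finset.range n, Measure.dirac (Z i ω)

/-- The expected squared loss of the parameter measure `m` at the data point `z`. -/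
noncomputable def sqLoss (m : Measure ℝ) (z : ℝ) : ℝ := ∫ θ, (θ - z) ^ 2 ∂m

open Finset

section Moments

variable {Ω : Type*} {mΩ : MeasurableSpace Ω} {P : Measure Ω}

lemma integral_sub_const_sq [IsProbabilityMeasure P] {X : Ω → ℝ} (hX : MemLp X 2 P) (c : ℝ) :
    ∫ ω, (X ω - c) ^ 2 ∂P = Var[X; P] + (P[X] - c) ^ 2 := by
  have h := variance_eq_sub (hX.sub (memLp_const c))
  rw [show X - (fun _ ↦ c) = fun ω ↦ X ω - c from rfl,
    variance_sub_const hX.aestronglyMeasurable, integral_sub (hX.integrable one_le_two)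
    (integrable_const c)] at h
  simp only [Pi.pow_apply, integral_const, probReal_univ, one_smul] at h
  linarith

lemma ProbabilityTheory.HasLaw.memLp {μ : Measure ℝ} {X : Ω → ℝ} {p : ℝ≥0∞} (hX : HasLaw X μ P)
    (h : MemLp id p μ) : MemLp X p P :=
  (memLp_map_measure_iff aestronglyMeasurable_id hX.aemeasurable).1 (hX.map_eq ▸ h)

variable {Z : ℕ → Ω → ℝ}

lemma memLp_sum_range_div {p : ℝ≥0∞} (hZ : ∀ i, MemLp (Z i) p P) (n : ℕ) :
    MemLp (fun ω ↦ (∑ i ∈ range n, Z i ω) / n) p P := by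
  simpa only [div_eq_mul_inv] using (memLp_finsetSum _ fun i _ ↦ hZ i).mul_const (n : ℝ)⁻¹

lemma integral_sum_range_div (hZ : ∀ i, Integrable (Z i) P) {m : ℝ} (hm : ∀ i, P[Z i] = m)
    {n : ℕ} (hn : n ≠ 0) : ∫ ω, (∑ i ∈ range n, Z i ω) / n ∂P = m := by
  rw [integral_div, integral_finsetSum _ fun i _ ↦ hZ i]
  simp [hm, hn]

lemma variance_sum_range_div (hZ : ∀ i, MemLp (Z i) 2 P)
    (hind : Pairwise fun i j ↦ IndepFun (Z i) (Z j) P) {σ2 : ℝ} (hvar : ∀ i, Var[Z i; P] = σ2)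
    (n : ℕ) : Var[fun ω ↦ (∑ i ∈ range n, Z i ω) / n; P] = σ2 / n := by
  have hsum : Var[∑ i ∈ range n, Z i; P] = n * σ2 := by
    rw [IndepFun.variance_sum (fun i _ ↦ hZ i) fun i _ j _ hij ↦ hind hij]
    simp [hvar]
  simp_rw [div_eq_inv_mul]
  rw [variance_const_mul, ← sum_fn, hsum]
  rcases eq_or_ne n 0 with rfl | hn
  · simp
  · field_simp

lemma integral_sum_range_div_sub_sq [IsProbabilityMeasure P] (hZ : ∀ i, MemLp (Z i) 2 P)
    (hind : Pairwise fun i j ↦ IndepFun (Z i) (Z j) P) {m σ2 : ℝ} (hm : ∀ i, P[Z i] = m)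
    (hvar : ∀ i, Var[Z i; P] = σ2) {n : ℕ} (hn : n ≠ 0) :
    ∫ ω, ((∑ i ∈ range n, Z i ω) / n - m) ^ 2 ∂P = σ2 / n := by
  rw [integral_sub_const_sq (memLp_sum_range_div hZ n), variance_sum_range_div hZ hind hvar,
    integral_sum_range_div (fun i ↦ (hZ i).integrable one_le_two) hm hn, sub_self]
  ring

end Moments

lemma integral_sub_const_sq_gaussianReal (μ c : ℝ) (v : ℝ≥0) :
    ∫ x, (x - c) ^ 2 ∂gaussianReal μ v = (μ - c) ^ 2 + v := by
  refine (integral_sub_const_sq (memLp_id_gaussianReal 2) c).trans ?_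
  simp [variance_id_gaussianReal, integral_id_gaussianReal, add_comm]

lemma sqLoss_gaussianReal (m z : ℝ) (s : ℝ≥0) : sqLoss (gaussianReal m s) z = (m - z) ^ 2 + s :=
  integral_sub_const_sq_gaussianReal m z s

lemma integral_sqLoss_gaussianReal (m μ : ℝ) (s v : ℝ≥0) :
    ∫ z, sqLoss (gaussianReal m s) z ∂gaussianReal μ v = (μ - m) ^ 2 + v + s := by
  have hsq : Integrable (fun z ↦ (z - m) ^ 2) (gaussianReal μ v) :=
    ((memLp_id_gaussianReal 2).sub (memLp_const m)).integrable_sq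
  simp_rw [sqLoss_gaussianReal, sub_sq_comm m]
  rw [integral_add hsq (integrable_const _), integral_sub_const_sq_gaussianReal]
  simp

lemma integral_empMeas {Ω : Type*} [MeasurableSpace Ω] (n : ℕ) (Z : ℕ → Ω → ℝ) (ω : Ω)
    (f : ℝ → ℝ) : ∫ z, f z ∂empMeas n Z ω = (∑ i ∈ range n, f (Z i ω)) / n := by
  rw [empMeas, integral_smul_measure,
    integral_finsetSum_measure fun i _ ↦ integrable_dirac (by simp)]
  simp [ENNReal.toReal_inv, div_eq_inv_mul]

lemma sum_mean_sub_sq {ι : Type*} (s : Finset ι) (x : ι → ℝ) (c : ℝ) :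
    ∑ i ∈ s, ((∑ j ∈ s, x j) / #s - x i) ^ 2
      = ∑ i ∈ s, (x i - c) ^ 2 - #s * ((∑ j ∈ s, x j) / #s - c) ^ 2 := by
  set a := (∑ j ∈ s, x j) / #s with ha
  have hsum : ∑ i ∈ s, (x i - c) = #s * (a - c) := by
    rcases s.eq_empty_or_nonempty with rfl | hs
    · simp
    · rw [sum_sub_distrib, sum_const, nsmul_eq_mul, mul_sub, ha,
        mul_div_cancel₀ _ (by simp [hs.ne_empty])]
  have hterm : ∀ i, (a - x i) ^ 2 = (x i - c) ^ 2 - 2 * (a - c) * (x i - c) + (a - c) ^ 2 :=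
    fun i ↦ by ring
  simp_rw [hterm, sum_add_distrib, sum_sub_distrib, ← mul_sum, hsum, sum_const, nsmul_eq_mul]
  ring

lemma integral_sqLoss_gaussianReal_sub_integral_empMeas {Ω : Type*} [MeasurableSpace Ω]
    {n : ℕ} (hn : n ≠ 0) (Z : ℕ → Ω → ℝ) (ω : Ω) (μ : ℝ) (v : ℝ≥0) :
    (∫ z, sqLoss (gaussianReal ((∑ i ∈ range n, Z i ω) / n) (v / n)) z ∂gaussianReal μ v) -
        ∫ z, sqLoss (gaussianReal ((∑ i ∈ range n, Z i ω) / n) (v / n)) z ∂empMeas n Z ω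
      = v + 2 * ((∑ i ∈ range n, Z i ω) / n - μ) ^ 2 - (∑ i ∈ range n, (Z i ω - μ) ^ 2) / n := by
  have hspread := sum_mean_sub_sq (range n) (fun i ↦ Z i ω) μ
  rw [card_range] at hspread
  simp_rw [integral_sqLoss_gaussianReal, integral_empMeas, sqLoss_gaussianReal, sum_add_distrib,
    hspread, sum_const, card_range, nsmul_eq_mul, NNReal.coe_div, NNReal.coe_natCast]
  field_simp
  ring

theorem gaussian_mean_estimation_gen_error_general
    {Ω : Type*} [MeasurableSpace Ω] (μΩ : Measure Ω) [IsProbabilityMeasure μΩ]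
    (n : ℕ) (hn : 0 < n) (μ₀ : ℝ) (v : ℝ≥0)
    (Z : ℕ → Ω → ℝ)
    (hindep : iIndepFun Z μΩ)
    (hlaw : ∀ i, Measure.map (Z i) μΩ = gaussianReal μ₀ v) :
    ∫ ω, ((∫ z, sqLoss (gaussianReal ((∑ i ∈ Finset.range n, Z i ω) / n) (v / n)) z
            ∂(gaussianReal μ₀ v)) -
          ∫ z, sqLoss (gaussianReal ((∑ i ∈ Finset.range n, Z i ω) / n) (v / n)) z
            ∂(empMeas n Z ω)) ∂μΩ = 2 * (v : ℝ) / n := by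
  have hZ : ∀ i, HasLaw (Z i) (gaussianReal μ₀ v) μΩ := fun i ↦
    ⟨.of_map_ne_zero (hlaw i ▸ IsProbabilityMeasure.ne_zero _), hlaw i⟩
  have hL2 : ∀ i, MemLp (Z i) 2 μΩ := fun i ↦ (hZ i).memLp (memLp_id_gaussianReal 2)
  have hmean : ∀ i, μΩ[Z i] = μ₀ := fun i ↦ (hZ i).integral_eq.trans integral_id_gaussianReal
  have hvar : ∀ i, Var[Z i; μΩ] = v := fun i ↦ (hZ i).variance_eq.trans variance_id_gaussianReal
  have hsq : ∀ i, Integrable (fun ω ↦ (Z i ω - μ₀) ^ 2) μΩ :=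
    fun i ↦ ((hL2 i).sub (memLp_const μ₀)).integrable_sq
  have hmeanSq : Integrable (fun ω ↦ ((∑ i ∈ range n, Z i ω) / n - μ₀) ^ 2) μΩ :=
    ((memLp_sum_range_div hL2 n).sub (memLp_const μ₀)).integrable_sq
  have hsumSq : Integrable (fun ω ↦ ∑ i ∈ range n, (Z i ω - μ₀) ^ 2) μΩ :=
    integrable_finsetSum _ fun i _ ↦ hsq i
  simp_rw [integral_sqLoss_gaussianReal_sub_integral_empMeas hn.ne']
  rw [integral_sub, integral_add, integral_const_mul, integral_div,
    integral_finsetSum _ fun i _ ↦ hsq i,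
    integral_sum_range_div_sub_sq hL2 (fun i j hij ↦ hindep.indepFun hij) hmean hvar hn.ne']
  · simp only [integral_const, probReal_univ, one_smul, integral_sub_const_sq (hL2 _), hvar,
      hmean, sub_self, zero_pow two_ne_zero, add_zero, sum_const, card_range, nsmul_eq_mul]
    field_simp
    ring
  · exact integrable_const _
  · exact hmeanSq.const_mul 2
  · exact (integrable_const _).add (hmeanSq.const_mul 2)
  · exact hsumSq.div_const _

/-- Gaussian mean estimation.  For the learning map
`𝔪(ν_n) = N(E_{Z∼ν_n}[Z], σ̃²/n)` (the law of the empirical-mean estimator) trained with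
the squared loss on `n` i.i.d. samples from `N(μ, σ̃²)`, the weak generalization error is
exactly `2σ̃²/n`. -/
theorem gaussian_mean_estimation_gen_error
    {Ω : Type*} [MeasurableSpace Ω] (μΩ : Measure Ω) [IsProbabilityMeasure μΩ]
    (n : ℕ) (hn : 0 < n) (μ₀ : ℝ) (v : ℝ≥0) (hv : v ≠ 0)
    (Z : ℕ → Ω → ℝ) (hmeas : ∀ i, Measurable (Z i))
    (hindep : iIndepFun Z μΩ)
    (hlaw : ∀ i, Measure.map (Z i) μΩ = gaussianReal μ₀ v) :
    ∫ ω, ((∫ z, sqLoss (gaussianReal ((∑ i ∈ Finset.range n, Z i ω) / n) (v / n)) z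
            ∂(gaussianReal μ₀ v)) -
          ∫ z, sqLoss (gaussianReal ((∑ i ∈ Finset.range n, Z i ω) / n) (v / n)) z
            ∂(empMeas n Z ω)) ∂μΩ = 2 * (v : ℝ) / n :=
  gaussian_mean_estimation_gen_error_general μΩ n hn μ₀ v Z hindep hlaw
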